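/- arXiv:2309.08593 — 3 statements merged into one kernel-verified Lean document; each statement's English description precedes it below -/
import Mathlib

section
/- The function x ↦ ReLU(x) - SiLU(x) = max(x,0) - x·σ(x) is bounded in absolute value by 0.2785 on all of ℝ, and it attains its supremum; moreover |max(x,0) - x·σ(x)| = |x|·σ(-|x|) for all x. -/
noncomputable def sigmoid (x : ℝ) : ℝ := 1 / (1 + Real.exp (-x))
noncomputable def SiLU (x : ℝ) : ℝ := x * sigmoid x
noncomputable def ReLU (x : ℝ) : ℝ := max x 0

/-!
Both for `x ≥ 0` (via `1 - σ x = σ (-x)`) and for `x ≤ 0` (where `ReLU x = 0`), the difference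
`ReLU x - SiLU x` equals `g |x|` with `g t = t σ(-t) = t / (1 + exp t) ≥ 0`. The tangent-line bound
`exp s ≥ 1 + s` at `s = t - (1 + c)` gives `t ≤ c (1 + exp t)` whenever `c exp (1 + c) ≥ 1`, which
holds for `c = 0.2785`. Finally `g t → 0` as `t → ∞`, so `g ∘ abs` is continuous and tends to `0`
away from compact sets, hence attains its maximum.
-/

open Filter Topology

lemma sigmoid_eq_real_sigmoid : sigmoid = Real.sigmoid := by
  ext x
  rw [sigmoid, Real.sigmoid_def, one_div]

lemma Real.sigmoid_neg_eq_inv (t : ℝ) : Real.sigmoid (-t) = (1 + Real.exp t)⁻¹ := by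
  rw [Real.sigmoid_def, neg_neg]

lemma relu_sub_silu (x : ℝ) : ReLU x - SiLU x = |x| * Real.sigmoid (-|x|) := by
  rcases le_total 0 x with hx | hx
  · rw [ReLU, SiLU, max_eq_left hx, abs_of_nonneg hx, sigmoid_eq_real_sigmoid,
      Real.sigmoid_neg]
    ring
  · rw [ReLU, SiLU, max_eq_right hx, abs_of_nonpos hx, neg_neg, sigmoid_eq_real_sigmoid]
    ring

lemma abs_relu_sub_silu (x : ℝ) : |ReLU x - SiLU x| = |x| * Real.sigmoid (-|x|) := by
  rw [relu_sub_silu, abs_of_nonneg (mul_nonneg (abs_nonneg x) (Real.sigmoid_nonneg _))]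

lemma le_mul_one_add_exp {c : ℝ} (hc : 1 ≤ c * Real.exp (1 + c)) (t : ℝ) :
    t ≤ c * (1 + Real.exp t) := by
  have tangent := Real.add_one_le_exp (t - (1 + c))
  have scaled : Real.exp (t - (1 + c)) ≤ c * Real.exp t := by
    rw [Real.exp_sub, div_le_iff₀ (Real.exp_pos _)]
    nlinarith [Real.exp_pos t]
  linarith

lemma one_le_mul_exp_one_add : (1 : ℝ) ≤ 0.2785 * Real.exp (1 + 0.2785) := by
  have h := Real.sum_le_exp_of_nonneg (x := 1 + 0.2785) (by norm_num) 8
  norm_num [Finset.sum_range_succ, Nat.factorial] at h ⊢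
  linarith

lemma mul_sigmoid_neg_le (t : ℝ) : t * Real.sigmoid (-t) ≤ 0.2785 := by
  rw [Real.sigmoid_neg_eq_inv, ← div_eq_mul_inv, div_le_iff₀ (by positivity)]
  exact le_mul_one_add_exp one_le_mul_exp_one_add t

lemma tendsto_mul_sigmoid_neg_atTop :
    Tendsto (fun t ↦ t * Real.sigmoid (-t)) atTop (𝓝 0) := by
  have decay := Real.tendsto_pow_mul_exp_neg_atTop_nhds_zero 1
  simp only [pow_one] at decay
  refine tendsto_of_tendsto_of_tendsto_of_le_of_le' tendsto_const_nhds decay ?_ ?_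
  · filter_upwards [eventually_ge_atTop 0] with t ht
    exact mul_nonneg ht (Real.sigmoid_nonneg _)
  · filter_upwards [eventually_ge_atTop 0] with t ht
    refine mul_le_mul_of_nonneg_left ?_ ht
    rw [Real.sigmoid_neg_eq_inv, Real.exp_neg]
    exact inv_anti₀ (Real.exp_pos t) (by linarith)

lemma exists_forall_abs_relu_sub_silu_le :
    ∃ x₀ : ℝ, ∀ x : ℝ, |ReLU x - SiLU x| ≤ |ReLU x₀ - SiLU x₀| := by
  simp only [abs_relu_sub_silu]
  have hcont : Continuous fun x : ℝ ↦ |x| * Real.sigmoid (-|x|) := by fun_prop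
  have hpos : (0 : ℝ) < |1| * Real.sigmoid (-|1|) :=
    mul_pos (by norm_num) (Real.sigmoid_pos _)
  have hvanish : Tendsto (fun x : ℝ ↦ |x| * Real.sigmoid (-|x|)) (cocompact ℝ) (𝓝 0) :=
    tendsto_mul_sigmoid_neg_atTop.comp tendsto_norm_cocompact_atTop
  exact hcont.exists_forall_ge' 1 ((hvanish.eventually (gt_mem_nhds hpos)).mono fun _ ↦ le_of_lt)

theorem relu_sub_silu_bounded :
    (∀ x : ℝ, |ReLU x - SiLU x| ≤ 0.2785) ∧
    (∃ x₀ : ℝ, ∀ x : ℝ, |ReLU x - SiLU x| ≤ |ReLU x₀ - SiLU x₀|) ∧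
    (∀ x : ℝ, |ReLU x - SiLU x| = |x| * sigmoid (-|x|)) := by
  refine ⟨fun x ↦ ?_, exists_forall_abs_relu_sub_silu_le, fun x ↦ ?_⟩
  · rw [abs_relu_sub_silu]
    exact mul_sigmoid_neg_le |x|
  · rw [abs_relu_sub_silu, sigmoid_eq_real_sigmoid]
end

section
/- Entrywise activation via attention heads: for a generalized SiLU function α(x) = a₁ SiLU(a₂ x), there exist D masked attention heads h₁,…,h_D on M_{N+1,D+1} such that α(X) ⊕ [0] = Σ_{i=1}^D hᵢ(X ⊕ [1]) for all X ∈ M_{N,D}, where α is applied entrywise. -/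
open Matrix

/-- Masked softmax: row-wise softmax restricted to the entries where the mask is 1. -/
noncomputable def msoftmax {ι : Type*} [Fintype ι] (A Λ : Matrix ι ι ℝ) : Matrix ι ι ℝ :=
  Matrix.of fun i j => (Λ i j * Real.exp (A i j)) / ∑ k, Λ i k * Real.exp (A i k)

/-- A mask matrix: 0/1 entries with at least one 1 in every row. -/
def IsMask {ι : Type*} [Fintype ι] (Λ : Matrix ι ι ℝ) : Prop :=
  (∀ i j, Λ i j = 0 ∨ Λ i j = 1) ∧ ∀ i, ∃ j, Λ i j = 1

/-- A masked attention head with parameter matrices `WQK`, `WOV` and mask `Λ`. -/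
noncomputable def attnHead {ι κ : Type*} [Fintype ι] [Fintype κ]
    (WQK WOV : Matrix κ κ ℝ) (Λ : Matrix ι ι ℝ) (X : Matrix ι κ ℝ) : Matrix ι κ ℝ :=
  msoftmax (X * WQK * Xᵀ) Λ * X * WOV

/-!
Append a bias token to `X`. Head `i` gives token `j` the logit `0` on itself and `-a₂ X j i` on the
bias token, and the mask hides every other token, so the softmax weight of token `j` on itself is
`sigmoid (a₂ X j i)`. The value-output map keeps only feature `i`, scaled by `a₁ a₂`, and the bias
token has no feature `i`; hence head `i` writes `a₁ a₂ X j i sigmoid (a₂ X j i) = a₁ SiLU (a₂ X j i)`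
into column `i` and zero elsewhere, and the `D` heads together fill every column.
-/

theorem sigmoid_eq_exp_div (x : ℝ) : sigmoid x = Real.exp x / (1 + Real.exp x) := by
  rw [sigmoid, Real.exp_neg]
  field_simp
  ring

theorem fromBlocks_sum {ι l m n o α : Type*} [AddCommMonoid α] (s : Finset ι)
    (A : ι → Matrix n l α) (B : ι → Matrix n m α) (C : ι → Matrix o l α) (D : ι → Matrix o m α) :
    fromBlocks (∑ i ∈ s, A i) (∑ i ∈ s, B i) (∑ i ∈ s, C i) (∑ i ∈ s, D i) =
      ∑ i ∈ s, fromBlocks (A i) (B i) (C i) (D i) := by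
  ext (r | r) (c | c) <;> simp [Matrix.sum_apply]

theorem msoftmax_fromBlocks_zero_col {n : Type*} [Fintype n] [DecidableEq n]
    (B : Matrix n (Fin 1) ℝ) :
    msoftmax (fromBlocks 0 B 0 0)
        (fromBlocks 1 (of fun _ _ => 1) 0 (1 : Matrix (Fin 1) (Fin 1) ℝ)) =
      fromBlocks (diagonal fun j => sigmoid (-B j 0)) (of fun j _ => sigmoid (B j 0)) 0 1 := by
  ext (r | r) (c | c)
  · by_cases h : r = c <;> simp [msoftmax, Fintype.sum_sum_type, one_apply, sigmoid, h]
  · simp [msoftmax, Fintype.sum_sum_type, one_apply, sigmoid_eq_exp_div, Fin.fin_one_eq_zero]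
  · simp [msoftmax]
  · simp [msoftmax, one_apply, Fin.fin_one_eq_zero]

section SiLUHead

variable {n d : Type*} [Fintype n] [DecidableEq n] [Fintype d] [DecidableEq d]

def siluQK (a₂ : ℝ) (i : d) : Matrix (d ⊕ Fin 1) (d ⊕ Fin 1) ℝ :=
  fromBlocks 0 (single i 0 (-a₂)) 0 0

def siluOV (a₁ a₂ : ℝ) (i : d) : Matrix (d ⊕ Fin 1) (d ⊕ Fin 1) ℝ :=
  fromBlocks (single i i (a₁ * a₂)) 0 0 0

theorem attnHead_siluQK_siluOV (a₁ a₂ : ℝ) (i : d) (X : Matrix n d ℝ) :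
    attnHead (siluQK a₂ i) (siluOV a₁ a₂ i)
        (fromBlocks 1 (of fun _ _ => 1) 0 (1 : Matrix (Fin 1) (Fin 1) ℝ))
        (fromBlocks X 0 0 1) =
      fromBlocks (X.map (fun x => a₁ * SiLU (a₂ * x)) * single i i (1 : ℝ)) 0 0 0 := by
  set Y : Matrix (n ⊕ Fin 1) (d ⊕ Fin 1) ℝ := fromBlocks X 0 0 1
  have hscore : Y * siluQK a₂ i * Yᵀ = fromBlocks 0 (of fun j _ => -(a₂ * X j i)) 0 0 := by
    simp only [Y, siluQK, fromBlocks_transpose, transpose_zero, transpose_one, fromBlocks_multiply,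
      Matrix.mul_zero, Matrix.zero_mul, Matrix.mul_one, mul_zero, mul_one, add_zero, zero_add,
      fromBlocks_inj, and_self, and_true, true_and]
    ext j c
    simp [Fin.fin_one_eq_zero, mul_comm]
  have hcol : diagonal (fun j => sigmoid (a₂ * X j i)) * X * single i i (a₁ * a₂) =
      X.map (fun x => a₁ * SiLU (a₂ * x)) * single i i (1 : ℝ) := by
    ext j k
    by_cases hk : k = i
    · subst hk
      simp only [mul_single_apply_same, diagonal_mul, SiLU, map_apply, mul_one]
      ring
    · simp [hk]
  rw [attnHead, hscore, msoftmax_fromBlocks_zero_col]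
  simp [Y, siluOV, fromBlocks_multiply, hcol]

end SiLUHead

theorem activation_via_attnHeads {N D : ℕ} (a₁ a₂ : ℝ) :
    ∃ WQK WOV : Fin D → Matrix (Fin D ⊕ Fin 1) (Fin D ⊕ Fin 1) ℝ,
      ∀ X : Matrix (Fin N) (Fin D) ℝ,
        fromBlocks (X.map (fun x => a₁ * SiLU (a₂ * x))) 0 0
            (0 : Matrix (Fin 1) (Fin 1) ℝ) =
          ∑ i : Fin D,
            attnHead (WQK i) (WOV i)
              (fromBlocks (1 : Matrix (Fin N) (Fin N) ℝ)
                (Matrix.of fun _ (_ : Fin 1) => (1 : ℝ)) 0 (1 : Matrix (Fin 1) (Fin 1) ℝ))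
              (fromBlocks X 0 0 (1 : Matrix (Fin 1) (Fin 1) ℝ)) := by
  refine ⟨siluQK a₂, siluOV a₁ a₂, fun X => ?_⟩
  simp only [attnHead_siluQK_siluOV]
  rw [← fromBlocks_sum, ← Matrix.mul_sum, sum_single_one]
  simp
end

section
/- Pseudo-masking limit: let h(X) = msoftmax(X W_QK Xᵀ, Λ₁) X W_OV be an attention head on M_{N,D} and Λ₂ ≥ Λ₁ another mask matrix. Define h_Ω on M_{N,D+N} by parameters W_QK ⊕ ΩΛ₁ and W_OV ⊕ 0 with mask Λ₂. Then for every compact K ⊂ M_{N,D}, h_Ω([X | I_N]) → [h(X) | 0] uniformly for X ∈ K as Ω → ∞. -/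
open Matrix

/-!
On `[X | I_N]` the block parameters produce the scores `X W_QK Xᵀ + Ω Λ₁` and the output
`[S X W_OV | 0]`, where `S` is the `Λ₂`-masked softmax of those scores. In row `i`, `S` weighs the
support of `Λ₁` by `e^Ω` and the rest of the support of `Λ₂` by `1`, so with `P` and `Q` the
exponential masses of these two parts, `S` differs from the `Λ₁`-masked softmax of `X W_QK Xᵀ` by at
most `Q / (e^Ω P)`. On a compact `K` the scores are bounded, which bounds `Q / P` uniformly; hence
the error is `O(e^{-Ω})` uniformly on `K`.
-/

open Filter Topology

lemma abs_mul_add_div_mul_add_sub_div_le {x y P Q t : ℝ} (hx : 0 ≤ x) (hxP : x ≤ P)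
    (hy : 0 ≤ y) (hyQ : y ≤ Q) (hP : 0 < P) (ht : 0 < t) :
    |(t * x + y) / (t * P + Q) - x / P| ≤ Q / (t * P) := by
  have hQ : 0 ≤ Q := hy.trans hyQ
  have hD : 0 < t * P + Q := by positivity
  have hnum : |(t * x + y) * P - (t * P + Q) * x| ≤ P * Q := by
    rw [abs_le]
    constructor <;> nlinarith [mul_le_mul hxP hyQ hy hP.le, mul_nonneg hx hy]
  rw [div_sub_div _ _ hD.ne' hP.ne', abs_div, abs_of_pos (mul_pos hD hP)]
  calc _ ≤ P * Q / ((t * P + Q) * P) := by gcongr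
    _ = Q / (t * P + Q) := by field_simp
    _ ≤ Q / (t * P) := by gcongr; linarith

namespace IsMask

variable {ι : Type*} [Fintype ι] {Λ : Matrix ι ι ℝ}

lemma nonneg (h : IsMask Λ) (i j : ι) : 0 ≤ Λ i j := by
  rcases h.1 i j with h | h <;> simp [h]

lemma le_one (h : IsMask Λ) (i j : ι) : Λ i j ≤ 1 := by
  rcases h.1 i j with h | h <;> simp [h]

end IsMask

lemma mul_exp_add_mul_eq {l₁ l₂ a Ω : ℝ} (h₁ : l₁ = 0 ∨ l₁ = 1) (hle : l₁ ≤ l₂) (h₂ : l₂ ≤ 1) :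
    l₂ * Real.exp (a + Ω * l₁) = Real.exp Ω * (l₁ * Real.exp a) + (l₂ - l₁) * Real.exp a := by
  rcases h₁ with rfl | rfl
  · simp
  · obtain rfl : l₂ = 1 := le_antisymm h₂ hle
    rw [mul_one, Real.exp_add]
    ring

section MaskedSoftmax

variable {ι : Type*} [Fintype ι] {Λ₁ Λ₂ : Matrix ι ι ℝ}

lemma msoftmax_add_smul_apply (h₁ : IsMask Λ₁) (h₂ : IsMask Λ₂) (hle : ∀ i j, Λ₁ i j ≤ Λ₂ i j)
    (A : Matrix ι ι ℝ) (Ω : ℝ) (i j : ι) :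
    msoftmax (A + Ω • Λ₁) Λ₂ i j =
      (Real.exp Ω * (Λ₁ i j * Real.exp (A i j)) + (Λ₂ i j - Λ₁ i j) * Real.exp (A i j)) /
        (Real.exp Ω * ∑ k, Λ₁ i k * Real.exp (A i k) +
          ∑ k, (Λ₂ i k - Λ₁ i k) * Real.exp (A i k)) := by
  have key : ∀ k, Λ₂ i k * Real.exp ((A + Ω • Λ₁) i k) =
      Real.exp Ω * (Λ₁ i k * Real.exp (A i k)) + (Λ₂ i k - Λ₁ i k) * Real.exp (A i k) :=
    fun k => mul_exp_add_mul_eq (h₁.1 i k) (hle i k) (h₂.le_one i k)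
  simp only [msoftmax, of_apply, key, Finset.sum_add_distrib, Finset.mul_sum]

lemma abs_msoftmax_add_smul_sub_le (h₁ : IsMask Λ₁) (h₂ : IsMask Λ₂)
    (hle : ∀ i j, Λ₁ i j ≤ Λ₂ i j) {A : Matrix ι ι ℝ} {M : ℝ} (hA : ∀ i j, |A i j| ≤ M)
    (Ω : ℝ) (i j : ι) :
    |msoftmax (A + Ω • Λ₁) Λ₂ i j - msoftmax A Λ₁ i j| ≤
      Fintype.card ι * Real.exp (2 * M) * Real.exp (-Ω) := by
  have hexp_le : ∀ k, Real.exp (A i k) ≤ Real.exp M := fun k =>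
    Real.exp_le_exp.2 (abs_le.1 (hA i k)).2
  have hdiff_nonneg : ∀ k, 0 ≤ Λ₂ i k - Λ₁ i k := fun k => sub_nonneg.2 (hle i k)
  have hP : Real.exp (-M) ≤ ∑ k, Λ₁ i k * Real.exp (A i k) := by
    obtain ⟨k, hk⟩ := h₁.2 i
    calc Real.exp (-M) ≤ Λ₁ i k * Real.exp (A i k) := by
          rw [hk, one_mul]; exact Real.exp_le_exp.2 (neg_le_of_abs_le (hA i k))
      _ ≤ _ := Finset.single_le_sum (fun k _ => mul_nonneg (h₁.nonneg i k) (Real.exp_pos _).le)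
          (Finset.mem_univ k)
  have hQ : ∑ k, (Λ₂ i k - Λ₁ i k) * Real.exp (A i k) ≤ Fintype.card ι * Real.exp M := by
    calc _ ≤ ∑ _k : ι, Real.exp M := Finset.sum_le_sum fun k _ =>
          (mul_le_of_le_one_left (Real.exp_pos _).le
            (by linarith [h₂.le_one i k, h₁.nonneg i k])).trans (hexp_le k)
      _ = _ := by simp
  rw [msoftmax_add_smul_apply h₁ h₂ hle]
  calc _ ≤ (∑ k, (Λ₂ i k - Λ₁ i k) * Real.exp (A i k)) /
        (Real.exp Ω * ∑ k, Λ₁ i k * Real.exp (A i k)) :=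
        abs_mul_add_div_mul_add_sub_div_le
          (mul_nonneg (h₁.nonneg i j) (Real.exp_pos _).le)
          (Finset.single_le_sum (f := fun k => Λ₁ i k * Real.exp (A i k))
            (fun k _ => mul_nonneg (h₁.nonneg i k) (Real.exp_pos _).le) (Finset.mem_univ j))
          (mul_nonneg (hdiff_nonneg j) (Real.exp_pos _).le)
          (Finset.single_le_sum (f := fun k => (Λ₂ i k - Λ₁ i k) * Real.exp (A i k))
            (fun k _ => mul_nonneg (hdiff_nonneg k) (Real.exp_pos _).le) (Finset.mem_univ j))
          ((Real.exp_pos _).trans_le hP) (Real.exp_pos Ω)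
    _ ≤ Fintype.card ι * Real.exp M / (Real.exp Ω * Real.exp (-M)) := by gcongr
    _ = _ := by
      simp only [mul_assoc, div_eq_mul_inv, ← Real.exp_neg, ← Real.exp_add]
      ring_nf

end MaskedSoftmax

lemma attnHead_fromBlocks_fromCols_one {ι κ : Type*} [Fintype ι] [DecidableEq ι] [Fintype κ]
    (WQK WOV : Matrix κ κ ℝ) (B Λ : Matrix ι ι ℝ) (X : Matrix ι κ ℝ) :
    attnHead (fromBlocks WQK 0 0 B) (fromBlocks WOV 0 0 0) Λ (fromCols X 1) =
      fromCols (msoftmax (X * WQK * Xᵀ + B) Λ * X * WOV) 0 := by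
  simp only [attnHead, transpose_fromCols, transpose_one, fromCols_mul_fromBlocks,
    fromCols_mul_fromRows, Matrix.mul_assoc (msoftmax _ Λ), mul_fromCols, Matrix.mul_zero,
    Matrix.one_mul, Matrix.mul_one, add_zero, zero_add]

lemma IsCompact.exists_forall_abs_apply_le {α m n : Type*} [TopologicalSpace α] [Fintype m]
    [Fintype n] {K : Set α} (hK : IsCompact K) {f : α → Matrix m n ℝ} (hf : ContinuousOn f K) :
    ∃ M, ∀ x ∈ K, ∀ i j, |f x i j| ≤ M := by
  let := Matrix.normedAddCommGroup (m := m) (n := n) (α := ℝ)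
  obtain ⟨M, hM⟩ := hK.exists_bound_of_continuousOn hf
  exact ⟨M, fun x hx i j => (norm_entry_le_entrywise_sup_norm (f x)).trans (hM x hx)⟩

lemma abs_mul_apply_sub_mul_apply_le {l m n : Type*} [Fintype m] {S T : Matrix l m ℝ}
    {Y : Matrix m n ℝ} {i : l} {j : n} {δ B : ℝ} (hST : ∀ k, |S i k - T i k| ≤ δ)
    (hY : ∀ k, |Y k j| ≤ B) :
    |(S * Y) i j - (T * Y) i j| ≤ Fintype.card m * (δ * B) := by
  rw [← Matrix.sub_apply, ← Matrix.sub_mul, mul_apply]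
  calc _ ≤ ∑ k, |(S - T) i k * Y k j| := Finset.abs_sum_le_sum_abs _ _
    _ ≤ ∑ _k : m, δ * B := Finset.sum_le_sum fun k _ => by
      rw [abs_mul]
      exact mul_le_mul (hST k) (hY k) (abs_nonneg _) ((abs_nonneg _).trans (hST k))
    _ = _ := by simp

theorem pseudo_masking_limit {N D : ℕ}
    (WQK WOV : Matrix (Fin D) (Fin D) ℝ) (Λ₁ Λ₂ : Matrix (Fin N) (Fin N) ℝ)
    (h₁ : IsMask Λ₁) (h₂ : IsMask Λ₂) (hle : ∀ i j, Λ₁ i j ≤ Λ₂ i j)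
    (K : Set (Matrix (Fin N) (Fin D) ℝ)) (hK : IsCompact K) :
    ∀ ε : ℝ, 0 < ε → ∃ Ω₀ : ℝ, ∀ Ω : ℝ, Ω₀ ≤ Ω → ∀ X ∈ K, ∀ i j,
      |attnHead (fromBlocks WQK 0 0 (Ω • Λ₁)) (fromBlocks WOV 0 0 0) Λ₂
          (fromCols X (1 : Matrix (Fin N) (Fin N) ℝ)) i j -
        fromCols (attnHead WQK WOV Λ₁ X) (0 : Matrix (Fin N) (Fin N) ℝ) i j| ≤ ε := by
  intro ε hε
  obtain ⟨M, hM⟩ := hK.exists_forall_abs_apply_le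
    (f := fun X => X * WQK * Xᵀ) (by fun_prop)
  obtain ⟨B, hB⟩ := hK.exists_forall_abs_apply_le (f := fun X => X * WOV) (by fun_prop)
  have hbound : Tendsto (fun Ω => N * (N * Real.exp (2 * M) * Real.exp (-Ω) * B))
      atTop (𝓝 0) := by
    simpa using ((Real.tendsto_exp_neg_atTop_nhds_zero.const_mul _).mul_const B).const_mul _
  obtain ⟨Ω₀, hΩ₀⟩ := eventually_atTop.1 (hbound.eventually (ge_mem_nhds hε))
  refine ⟨Ω₀, fun Ω hΩ X hX i j => ?_⟩
  rw [attnHead_fromBlocks_fromCols_one]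
  cases j with
  | inl j =>
    rw [fromCols_apply_inl, fromCols_apply_inl, attnHead, Matrix.mul_assoc _ X,
      Matrix.mul_assoc _ X]
    refine (abs_mul_apply_sub_mul_apply_le
      (fun k => abs_msoftmax_add_smul_sub_le h₁ h₂ hle (hM X hX) Ω i k)
      (fun k => hB X hX k j)).trans ?_
    simpa using hΩ₀ Ω hΩ
  | inr j => simpa using hε.le
end
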